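/- For all finitely supported sequences v, w : ℤ² → ℂ, one has the cancellation: Im ( ∑_{(j,j1,j2,j3) ∈ R} ⟨j⟩² · [ conj(v_j)·w_{j1}·conj(w_{j2})·v_{j3} + conj(w_j)·v_{j1}·conj(v_{j2})·w_{j3} ] ) = 0; moreover this sum equals Im ( ∑_{(j,j1,j2,j3) ∈ R} (⟨j⟩² + ⟨j2⟩²) · conj(v_j)·w_{j1}·conj(w_{j2})·v_{j3} ). -/
import Mathlib


noncomputable section

/-- The Euclidean norm squared of a lattice point in `ℤ²`. -/
def nsq (j : ℤ × ℤ) : ℤ := j.1 ^ 2 + j.2 ^ 2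

/-- The Japanese bracket squared `⟨j⟩² = 1 + |j|²`, as a complex number. -/
def wt (j : ℤ × ℤ) : ℂ := ((1 + nsq j : ℤ) : ℂ)

/-- The resonance relation on quadruples in `(ℤ²)⁴`:
`j1 - j2 + j3 = j` and `|j1|² - |j2|² + |j3|² = |j|²`. -/
def Res (q : (ℤ × ℤ) × (ℤ × ℤ) × (ℤ × ℤ) × (ℤ × ℤ)) : Prop :=
  q.2.1 - q.2.2.1 + q.2.2.2 = q.1 ∧
    nsq q.2.1 - nsq q.2.2.1 + nsq q.2.2.2 = nsq q.1

instance : DecidablePred Res := fun q => by unfold Res; infer_instance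

abbrev Q4 := (ℤ × ℤ) × (ℤ × ℤ) × (ℤ × ℤ) × (ℤ × ℤ)

def sigma4 : Q4 → Q4 := fun q => (q.2.2.1, q.2.2.2, q.1, q.2.1)

lemma sigma4_invol : Function.Involutive sigma4 := fun _ => rfl

def tau4 : Q4 → Q4 := fun q => (q.2.2.2, q.2.2.1, q.2.1, q.1)

lemma tau4_invol : Function.Involutive tau4 := fun _ => rfl

lemma res_sigma (q : Q4) : Res (sigma4 q) ↔ Res q := by
  obtain ⟨j, j1, j2, j3⟩ := q
  simp only [Res, sigma4]
  constructor <;> rintro ⟨h1, h2⟩ <;>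
    exact ⟨by linear_combination h1, by linear_combination h2⟩

lemma res_tau (q : Q4) : Res (tau4 q) ↔ Res q := by
  obtain ⟨j, j1, j2, j3⟩ := q
  simp only [Res, tau4]
  constructor <;> rintro ⟨h1, h2⟩ <;>
    exact ⟨by linear_combination -h1, by linear_combination -h2⟩

lemma conj_wt (j : ℤ × ℤ) : (starRingEnd ℂ) (wt j) = wt j := by
  simp [wt]


def Tq (v w : ℤ × ℤ → ℂ) (q : Q4) : ℂ :=
  (starRingEnd ℂ) (v q.1) * w q.2.1 * (starRingEnd ℂ) (w q.2.2.1) * v q.2.2.2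

def fA (v w : ℤ × ℤ → ℂ) (q : Q4) : ℂ := if Res q then wt q.1 * Tq v w q else 0
def fC (v w : ℤ × ℤ → ℂ) (q : Q4) : ℂ := if Res q then wt q.2.2.1 * Tq v w q else 0
def f3 (v w : ℤ × ℤ → ℂ) (q : Q4) : ℂ :=
  if Res q then (wt q.1 + wt q.2.2.1) * Tq v w q else 0

set_option maxHeartbeats 2000000 in
/-- Third observation: for finitely supported `v, w : ℤ² → ℂ`, the `⟨j⟩²`-weighted
resonant form with `v`-entries in slots `(j, j₃)` plus `v`-entries in slots `(j₁, j₂)`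
has vanishing imaginary part, and moreover it equals the `(⟨j⟩² + ⟨j₂⟩²)`-weighted form
with `v`-entries in slots `(j, j₃)` only. -/
theorem third_observation (v w : ℤ × ℤ → ℂ)
    (hv : (Function.support v).Finite) (hw : (Function.support w).Finite) :
    (∑' q : (ℤ × ℤ) × (ℤ × ℤ) × (ℤ × ℤ) × (ℤ × ℤ),
      if Res q then
        wt q.1 *
          ((starRingEnd ℂ) (v q.1) * w q.2.1 * (starRingEnd ℂ) (w q.2.2.1) * v q.2.2.2 +
           (starRingEnd ℂ) (w q.1) * v q.2.1 * (starRingEnd ℂ) (v q.2.2.1) * w q.2.2.2)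
      else 0).im = 0 ∧
    (∑' q : (ℤ × ℤ) × (ℤ × ℤ) × (ℤ × ℤ) × (ℤ × ℤ),
      if Res q then
        wt q.1 *
          ((starRingEnd ℂ) (v q.1) * w q.2.1 * (starRingEnd ℂ) (w q.2.2.1) * v q.2.2.2 +
           (starRingEnd ℂ) (w q.1) * v q.2.1 * (starRingEnd ℂ) (v q.2.2.1) * w q.2.2.2)
      else 0).im =
    (∑' q : (ℤ × ℤ) × (ℤ × ℤ) × (ℤ × ℤ) × (ℤ × ℤ),
      if Res q then
        (wt q.1 + wt q.2.2.1) *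
          ((starRingEnd ℂ) (v q.1) * w q.2.1 * (starRingEnd ℂ) (w q.2.2.1) * v q.2.2.2)
      else 0).im := by
  classical
  set s : Finset Q4 := hv.toFinset ×ˢ hw.toFinset ×ˢ hw.toFinset ×ˢ hv.toFinset with hs
  have key : ∀ q : Q4, q ∉ s → Tq v w q = 0 := by
    intro q hq
    simp only [hs, Finset.mem_product, Set.Finite.mem_toFinset, Function.mem_support,
      not_and_or, not_not] at hq
    rcases hq with h | h | h | h <;> simp [Tq, h]
  have hsA : Summable (fA v w) :=
    summable_of_ne_finset_zero (s := s) (fun q hq => by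
      simp only [fA]; split <;> simp [key q hq])
  have hsC : Summable (fC v w) :=
    summable_of_ne_finset_zero (s := s) (fun q hq => by
      simp only [fC]; split <;> simp [key q hq])
  have hσe : Summable (fun q => fC v w (sigma4 q)) :=
    (sigma4_invol.toPerm _).summable_iff.mpr hsC
  have hcomb : (fun q : Q4 =>
      if Res q then
        wt q.1 *
          ((starRingEnd ℂ) (v q.1) * w q.2.1 * (starRingEnd ℂ) (w q.2.2.1) * v q.2.2.2 +
           (starRingEnd ℂ) (w q.1) * v q.2.1 * (starRingEnd ℂ) (v q.2.2.1) * w q.2.2.2)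
      else 0) = fun q => fA v w q + fC v w (sigma4 q) := by
    funext q
    simp only [fA, fC, Tq]
    rw [if_congr (res_sigma q) rfl rfl]
    split
    · simp only [sigma4]; ring
    · simp
  have main : (∑' q : Q4,
      if Res q then
        wt q.1 *
          ((starRingEnd ℂ) (v q.1) * w q.2.1 * (starRingEnd ℂ) (w q.2.2.1) * v q.2.2.2 +
           (starRingEnd ℂ) (w q.1) * v q.2.1 * (starRingEnd ℂ) (v q.2.2.1) * w q.2.2.2)
      else 0) = ∑' q, f3 v w q := by
    have hσ : ∑' b : Q4, fC v w (sigma4 b) = ∑' b, fC v w b := by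
      simpa [Function.Involutive.coe_toPerm] using
        (sigma4_invol.toPerm sigma4).tsum_eq (fC v w)
    rw [hcomb, Summable.tsum_add hsA hσe, hσ, ← Summable.tsum_add hsA hsC]
    congr 1
    funext q
    simp only [fA, fC, f3]
    split
    · ring
    · simp
  have hreal : (∑' q, f3 v w q).im = 0 := by
    have hconj : (starRingEnd ℂ) (∑' q, f3 v w q) = ∑' q, f3 v w q := by
      calc (starRingEnd ℂ) (∑' q, f3 v w q) = ∑' q, (starRingEnd ℂ) (f3 v w q) := by
            exact tsum_star
        _ = ∑' q, f3 v w (tau4 q) := by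
            congr 1
            funext q
            simp only [f3, apply_ite (starRingEnd ℂ), map_zero]
            rw [if_congr (res_tau q).symm rfl rfl]
            split
            · rename_i hres
              obtain ⟨-, h2⟩ := hres
              simp only [tau4] at h2 ⊢
              have hwt : wt q.2.2.2 + wt q.2.1 = wt q.1 + wt q.2.2.1 := by
                simp only [wt, ← Int.cast_add]
                congr 1
                linarith
              simp only [Tq, map_add, map_mul, conj_wt, Complex.conj_conj]
              rw [hwt]
              ring
            · rfl
        _ = ∑' q, f3 v w q := by
            simpa [Function.Involutive.coe_toPerm] using
              (tau4_invol.toPerm tau4).tsum_eq (f3 v w)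
    exact Complex.conj_eq_iff_im.mp hconj
  have main' : (∑' q : Q4,
      if Res q then
        (wt q.1 + wt q.2.2.1) *
          ((starRingEnd ℂ) (v q.1) * w q.2.1 * (starRingEnd ℂ) (w q.2.2.1) * v q.2.2.2)
      else 0) = ∑' q, f3 v w q := rfl
  exact ⟨by rw [main]; exact hreal, by rw [main, main']⟩
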